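/- Assume V is continuously differentiable on a neighborhood of [0,T] × S_d, satisfies ℒ[V](t,m) = 0 for all (t,m) ∈ [0,T] × S_d and V(T,m) = ∑_{i=1}^d m_i g^i(m) for all m ∈ S_d, and assume each map z ↦ H^i(t,m,z) is Lipschitz with a common constant C > 0. Suppose that for each n ∈ ℕ, φ^n is continuously differentiable on a neighborhood of [0,T] × S_d and satisfies sup_{(t,m)} |V − φ^n| + sup_{(t,m)} |∂_t V − ∂_t φ^n| + sup_{(t,m)} ‖∇_m V − ∇_m φ^n‖ < 1/n on [0,T] × S_d. Define e^n : [0,T] × S_d → ℝ by e^n(t,m) := ℒ[φ^n](t,m) for t ∈ [0,T) and e^n(T,m) := φ^n(T,m) − ∑_{i=1}^d m_i g^i(m). Then sup_{(t,m) ∈ [0,T]×S_d} |e^n(t,m)| ≤ (√2 · C · d^{3/2} + 1)/n; in particular sup_{[0,T]×S_d} |e^n| → 0 and sup_{[0,T]×S_d} |φ^n − V| → 0 as n → ∞. -/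

import Mathlib

open scoped BigOperators RealInnerProductSpace Topology
noncomputable section

/-- The (d-1)-dimensional probability simplex in ℝ^d. -/
def simplexSet (d : ℕ) : Set (EuclideanSpace ℝ (Fin d)) :=
  {m | (∀ i, 0 ≤ m i) ∧ ∑ i, m i = 1}

/-- The standard basis vector `e_i` of ℝ^d. -/
def eVec (d : ℕ) (i : Fin d) : EuclideanSpace ℝ (Fin d) := EuclideanSpace.single i 1

/-- `D^i h (t,m)`: the vector of directional derivatives of `h(t,·)` at `m` in the
directions `e_j - e_i`, `j = 1,…,d`. -/
def Dvec (d : ℕ) (h : ℝ → EuclideanSpace ℝ (Fin d) → ℝ) (i : Fin d) (t : ℝ)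
    (m : EuclideanSpace ℝ (Fin d)) : EuclideanSpace ℝ (Fin d) :=
  (EuclideanSpace.equiv (Fin d) ℝ).symm fun j => fderiv ℝ (h t) m (eVec d j - eVec d i)

/-- `h` is continuously differentiable on an open neighborhood of `[0,T] × S_d`. -/
def C1OnNbhd (d : ℕ) (T : ℝ) (h : ℝ → EuclideanSpace ℝ (Fin d) → ℝ) : Prop :=
  ∃ U : Set (ℝ × EuclideanSpace ℝ (Fin d)), IsOpen U ∧
    Set.Icc (0:ℝ) T ×ˢ simplexSet d ⊆ U ∧ ContDiffOn ℝ 1 (fun p => h p.1 p.2) U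

/-- The HJB operator `ℒ[φ](t,m) = -∂_t φ(t,m) + ∑_i m_i H^i(t,m,D^iφ(t,m))`. -/
def HJBop (d : ℕ) (H : Fin d → ℝ → EuclideanSpace ℝ (Fin d) → EuclideanSpace ℝ (Fin d) → ℝ)
    (φ : ℝ → EuclideanSpace ℝ (Fin d) → ℝ) (t : ℝ) (m : EuclideanSpace ℝ (Fin d)) : ℝ :=
  -(deriv (fun s => φ s m) t) + ∑ i, m i * H i t m (Dvec d φ i t m)

/-- The error term `e(t,m) := ℒ[φ](t,m)` for `t ∈ [0,T)` and
`e(T,m) := φ(T,m) - ∑_i m_i g^i(m)`. -/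
def errTerm (d : ℕ) (T : ℝ)
    (H : Fin d → ℝ → EuclideanSpace ℝ (Fin d) → EuclideanSpace ℝ (Fin d) → ℝ)
    (g : Fin d → EuclideanSpace ℝ (Fin d) → ℝ)
    (φ : ℝ → EuclideanSpace ℝ (Fin d) → ℝ) (t : ℝ) (m : EuclideanSpace ℝ (Fin d)) : ℝ :=
  if t = T then φ T m - ∑ i, m i * g i m else HJBop d H φ t m


section AuxLemmas
variable {d : ℕ}

lemma inner_gradient_eq (f : EuclideanSpace ℝ (Fin d) → ℝ) (x v : EuclideanSpace ℝ (Fin d)) :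
    ⟪gradient f x, v⟫ = fderiv ℝ f x v := by
  rw [gradient]; exact InnerProductSpace.toDual_symm_apply

lemma norm_eVec_sub_le (i j : Fin d) : ‖eVec d j - eVec d i‖ ≤ Real.sqrt 2 := by
  have h1 : ‖eVec d j - eVec d i‖ ^ 2 ≤ 2 := by
    have := @norm_sub_sq_real (EuclideanSpace ℝ (Fin d)) _ _ (eVec d j) (eVec d i)
    have hn : ∀ k : Fin d, ‖eVec d k‖ = 1 := by
      intro k; simp [eVec, EuclideanSpace.norm_single]
    have hip : (0:ℝ) ≤ ⟪eVec d j, eVec d i⟫ := by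
      simp only [eVec, EuclideanSpace.inner_single_left, EuclideanSpace.single_apply,
        map_one, one_mul]
      split <;> norm_num
    rw [this, hn, hn]; nlinarith
  have := Real.sqrt_le_sqrt h1
  rwa [Real.sqrt_sq (norm_nonneg _)] at this

lemma Dvec_sub_apply (h h' : ℝ → EuclideanSpace ℝ (Fin d) → ℝ) (i : Fin d) (t : ℝ)
    (m : EuclideanSpace ℝ (Fin d)) (j : Fin d) :
    (Dvec d h i t m - Dvec d h' i t m) j =
      ⟪gradient (h t) m - gradient (h' t) m, eVec d j - eVec d i⟫ := by
  have : (Dvec d h i t m - Dvec d h' i t m) j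
      = fderiv ℝ (h t) m (eVec d j - eVec d i) - fderiv ℝ (h' t) m (eVec d j - eVec d i) := rfl
  rw [this, inner_sub_left, inner_gradient_eq, inner_gradient_eq]

lemma norm_Dvec_sub_le (h h' : ℝ → EuclideanSpace ℝ (Fin d) → ℝ) (i : Fin d) (t : ℝ)
    (m : EuclideanSpace ℝ (Fin d)) :
    ‖Dvec d h i t m - Dvec d h' i t m‖ ≤
      Real.sqrt 2 * Real.sqrt d * ‖gradient (h t) m - gradient (h' t) m‖ := by
  set G := gradient (h t) m - gradient (h' t) m with hG
  have hcomp : ∀ j, |(Dvec d h i t m - Dvec d h' i t m) j| ≤ Real.sqrt 2 * ‖G‖ := by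
    intro j
    rw [Dvec_sub_apply]
    calc |⟪G, eVec d j - eVec d i⟫| ≤ ‖G‖ * ‖eVec d j - eVec d i‖ :=
          abs_real_inner_le_norm _ _
      _ ≤ ‖G‖ * Real.sqrt 2 := by
          exact mul_le_mul_of_nonneg_left (norm_eVec_sub_le i j) (norm_nonneg _)
      _ = Real.sqrt 2 * ‖G‖ := mul_comm _ _
  rw [EuclideanSpace.norm_eq]
  have hsum : ∑ j, ‖(Dvec d h i t m - Dvec d h' i t m) j‖ ^ 2 ≤
      (d : ℝ) * ((Real.sqrt 2 * ‖G‖) ^ 2) := by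
    calc ∑ j, ‖(Dvec d h i t m - Dvec d h' i t m) j‖ ^ 2
        ≤ ∑ _j : Fin d, (Real.sqrt 2 * ‖G‖) ^ 2 := by
          apply Finset.sum_le_sum; intro j _
          have := hcomp j
          have h0 : (0:ℝ) ≤ |(Dvec d h i t m - Dvec d h' i t m) j| := abs_nonneg _
          rw [Real.norm_eq_abs]; nlinarith
      _ = (d : ℝ) * ((Real.sqrt 2 * ‖G‖) ^ 2) := by simp [Finset.sum_const, mul_comm]
  calc Real.sqrt (∑ j, ‖(Dvec d h i t m - Dvec d h' i t m) j‖ ^ 2)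
      ≤ Real.sqrt ((d : ℝ) * ((Real.sqrt 2 * ‖G‖) ^ 2)) := Real.sqrt_le_sqrt hsum
    _ = Real.sqrt d * (Real.sqrt 2 * ‖G‖) := by
        rw [Real.sqrt_mul (by positivity), Real.sqrt_sq (by positivity)]
    _ = Real.sqrt 2 * Real.sqrt d * ‖G‖ := by ring

lemma simplex_compact (d : ℕ) : IsCompact (simplexSet d) := by
  rw [Metric.isCompact_iff_isClosed_bounded]
  constructor
  · have h1 : IsClosed {m : EuclideanSpace ℝ (Fin d) | ∀ i, 0 ≤ m i} := by
      have heq : {m : EuclideanSpace ℝ (Fin d) | ∀ i, 0 ≤ m i} =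
          ⋂ i, {m : EuclideanSpace ℝ (Fin d) |
            (0:ℝ) ≤ (EuclideanSpace.proj i : EuclideanSpace ℝ (Fin d) →L[ℝ] ℝ) m} := by
        ext m; simp
      rw [heq]
      exact isClosed_iInter fun i => isClosed_le continuous_const
        (EuclideanSpace.proj i : EuclideanSpace ℝ (Fin d) →L[ℝ] ℝ).continuous
    have h2 : IsClosed {m : EuclideanSpace ℝ (Fin d) | ∑ i, m i = 1} :=
      isClosed_eq (continuous_finset_sum _ fun i _ =>
        (EuclideanSpace.proj i : EuclideanSpace ℝ (Fin d) →L[ℝ] ℝ).continuous)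
        continuous_const
    exact (h1.inter h2)
  · apply Bornology.IsBounded.subset (Metric.isBounded_closedBall (x := (0:EuclideanSpace ℝ (Fin d))) (r := 1))
    intro m hm
    obtain ⟨h0, h1⟩ := hm
    simp only [Metric.mem_closedBall, dist_zero_right]
    rw [EuclideanSpace.norm_eq]
    have hle : ∀ i, m i ≤ 1 := by
      intro i
      calc m i ≤ ∑ j, m j := Finset.single_le_sum (fun j _ => h0 j) (Finset.mem_univ i)
        _ = 1 := h1
    have : ∑ i, ‖m i‖ ^ 2 ≤ 1 := by
      calc ∑ i, ‖m i‖ ^ 2 ≤ ∑ i, m i := by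
            apply Finset.sum_le_sum; intro i _
            rw [Real.norm_eq_abs, sq_abs]
            nlinarith [h0 i, hle i]
        _ = 1 := h1
    calc Real.sqrt (∑ i, ‖m i‖ ^ 2) ≤ Real.sqrt 1 := Real.sqrt_le_sqrt this
      _ = 1 := Real.sqrt_one

lemma simplex_nonempty (d : ℕ) (hd : 1 ≤ d) : (simplexSet d).Nonempty := by
  refine ⟨eVec d ⟨0, by omega⟩, ?_, ?_⟩
  · intro i; simp [eVec, EuclideanSpace.single_apply]; positivity
  · simp [eVec, EuclideanSpace.single_apply]

lemma contOn_of_C1 {T : ℝ} {h : ℝ → EuclideanSpace ℝ (Fin d) → ℝ} (hh : C1OnNbhd d T h) :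
    ∃ U : Set (ℝ × EuclideanSpace ℝ (Fin d)), IsOpen U ∧
      Set.Icc (0:ℝ) T ×ˢ simplexSet d ⊆ U ∧
      ContinuousOn (fun p : ℝ × EuclideanSpace ℝ (Fin d) => h p.1 p.2) U ∧
      ContinuousOn (fun p : ℝ × EuclideanSpace ℝ (Fin d) => deriv (fun s => h s p.2) p.1) U ∧
      ContinuousOn (fun p : ℝ × EuclideanSpace ℝ (Fin d) => gradient (h p.1) p.2) U := by
  obtain ⟨U, hUo, hKU, hF⟩ := hh
  set F := fun p : ℝ × EuclideanSpace ℝ (Fin d) => h p.1 p.2 with hFdef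
  have hFd : ∀ p ∈ U, HasFDerivAt F (fderiv ℝ F p) p := fun p hp =>
    ((hF.differentiableOn one_ne_zero).differentiableAt (hUo.mem_nhds hp)).hasFDerivAt
  have hfc : ContinuousOn (fderiv ℝ F) U := hF.continuousOn_fderiv_of_isOpen hUo le_rfl
  refine ⟨U, hUo, hKU, hF.continuousOn, ?_, ?_⟩
  · have heq : ∀ p ∈ U, deriv (fun s => h s p.2) p.1
        = fderiv ℝ F p ((1:ℝ), (0:EuclideanSpace ℝ (Fin d))) := by
      intro p hp
      have h1 : HasDerivAt (fun s : ℝ => (s, p.2)) ((1:ℝ), (0:EuclideanSpace ℝ (Fin d))) p.1 :=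
        HasDerivAt.prodMk (hasDerivAt_id p.1) (hasDerivAt_const p.1 p.2)
      have h2 := (hFd p hp).comp_hasDerivAt p.1 h1
      exact h2.deriv
    exact ContinuousOn.congr (hfc.clm_apply continuousOn_const) heq
  · have heq : ∀ p ∈ U, gradient (h p.1) p.2 =
        (InnerProductSpace.toDual ℝ (EuclideanSpace ℝ (Fin d))).symm
          ((fderiv ℝ F p).comp (ContinuousLinearMap.inr ℝ ℝ (EuclideanSpace ℝ (Fin d)))) := by
      intro p hp
      have h1 := hasFDerivAt_prodMk_right (𝕜 := ℝ) p.1 p.2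
      have h2 := (hFd p hp).comp p.2 h1
      rw [gradient]
      congr 1
      exact h2.fderiv
    refine ContinuousOn.congr ?_ heq
    exact (InnerProductSpace.toDual ℝ (EuclideanSpace ℝ (Fin d))).symm.continuous.comp_continuousOn
      (hfc.clm_comp continuousOn_const)

end AuxLemmas


/-- for a sequence `φⁿ` approximating the classical solution `V` to within
`1/n` in the C¹ sense on `[0,T] × S_d`, the error terms `eⁿ` satisfy
`sup |eⁿ| ≤ (√2 C d^{3/2} + 1)/n`; in particular `sup|eⁿ| → 0` and `sup|φⁿ - V| → 0`. -/
theorem error_term_convergence (d : ℕ) (hd : 2 ≤ d) (T : ℝ) (hT : 0 < T) (C : ℝ) (hC : 0 < C)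
    (H : Fin d → ℝ → EuclideanSpace ℝ (Fin d) → EuclideanSpace ℝ (Fin d) → ℝ)
    (hH : ∀ i : Fin d, ∀ t ∈ Set.Icc (0:ℝ) T, ∀ m ∈ simplexSet d,
      ∀ z z' : EuclideanSpace ℝ (Fin d), |H i t m z - H i t m z'| ≤ C * ‖z - z'‖)
    (g : Fin d → EuclideanSpace ℝ (Fin d) → ℝ)
    (V : ℝ → EuclideanSpace ℝ (Fin d) → ℝ) (hV : C1OnNbhd d T V)
    (hVpde : ∀ t ∈ Set.Icc (0:ℝ) T, ∀ m ∈ simplexSet d, HJBop d H V t m = 0)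
    (hVterm : ∀ m ∈ simplexSet d, V T m = ∑ i, m i * g i m)
    (φ : ℕ → ℝ → EuclideanSpace ℝ (Fin d) → ℝ) (hφ : ∀ n, C1OnNbhd d T (φ n))
    (happrox : ∀ n : ℕ, 1 ≤ n →
      sSup ((fun p : ℝ × EuclideanSpace ℝ (Fin d) => |V p.1 p.2 - φ n p.1 p.2|) ''
          (Set.Icc (0:ℝ) T ×ˢ simplexSet d)) +
      sSup ((fun p : ℝ × EuclideanSpace ℝ (Fin d) =>
          |deriv (fun s => V s p.2) p.1 - deriv (fun s => φ n s p.2) p.1|) ''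
          (Set.Icc (0:ℝ) T ×ˢ simplexSet d)) +
      sSup ((fun p : ℝ × EuclideanSpace ℝ (Fin d) =>
          ‖gradient (V p.1) p.2 - gradient (φ n p.1) p.2‖) ''
          (Set.Icc (0:ℝ) T ×ˢ simplexSet d)) < 1 / (n : ℝ)) :
    (∀ n : ℕ, 1 ≤ n → ∀ t ∈ Set.Icc (0:ℝ) T, ∀ m ∈ simplexSet d,
      |errTerm d T H g (φ n) t m| ≤ (Real.sqrt 2 * C * (d : ℝ) ^ ((3:ℝ)/2) + 1) / (n : ℝ)) ∧
    Filter.Tendsto (fun n : ℕ =>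
      sSup ((fun p : ℝ × EuclideanSpace ℝ (Fin d) => |errTerm d T H g (φ n) p.1 p.2|) ''
        (Set.Icc (0:ℝ) T ×ˢ simplexSet d))) Filter.atTop (𝓝 0) ∧
    Filter.Tendsto (fun n : ℕ =>
      sSup ((fun p : ℝ × EuclideanSpace ℝ (Fin d) => |φ n p.1 p.2 - V p.1 p.2|) ''
        (Set.Icc (0:ℝ) T ×ˢ simplexSet d))) Filter.atTop (𝓝 0) := by
  classical
  set K : Set (ℝ × EuclideanSpace ℝ (Fin d)) := Set.Icc (0:ℝ) T ×ˢ simplexSet d with hKdef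
  have hKcomp : IsCompact K := isCompact_Icc.prod (simplex_compact d)
  have hKne : K.Nonempty :=
    (Set.nonempty_Icc.2 hT.le).prod (simplex_nonempty d (by omega))
  set S1 : ℕ → ℝ := fun n =>
    sSup ((fun p : ℝ × EuclideanSpace ℝ (Fin d) => |V p.1 p.2 - φ n p.1 p.2|) '' K) with hS1
  set S2 : ℕ → ℝ := fun n =>
    sSup ((fun p : ℝ × EuclideanSpace ℝ (Fin d) =>
      |deriv (fun s => V s p.2) p.1 - deriv (fun s => φ n s p.2) p.1|) '' K) with hS2
  set S3 : ℕ → ℝ := fun n =>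
    sSup ((fun p : ℝ × EuclideanSpace ℝ (Fin d) =>
      ‖gradient (V p.1) p.2 - gradient (φ n p.1) p.2‖) '' K) with hS3
  obtain ⟨UV, hUVo, hKUV, hVc0, hVc1, hVc2⟩ := contOn_of_C1 hV
  have nn : ∀ (f : ℝ × EuclideanSpace ℝ (Fin d) → ℝ), (∀ p, 0 ≤ f p) → 0 ≤ sSup (f '' K) := by
    intro f hf
    apply Real.sSup_nonneg
    rintro x ⟨p, -, rfl⟩; exact hf p
  have hS1nn : ∀ n, 0 ≤ S1 n := fun n => nn _ fun p => abs_nonneg _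
  have hS2nn : ∀ n, 0 ≤ S2 n := fun n => nn _ fun p => abs_nonneg _
  have hS3nn : ∀ n, 0 ≤ S3 n := fun n => nn _ fun p => norm_nonneg _
  have props : ∀ n : ℕ,
      (∀ p ∈ K, |V p.1 p.2 - φ n p.1 p.2| ≤ S1 n) ∧
      (∀ p ∈ K, |deriv (fun s => V s p.2) p.1 - deriv (fun s => φ n s p.2) p.1| ≤ S2 n) ∧
      (∀ p ∈ K, ‖gradient (V p.1) p.2 - gradient (φ n p.1) p.2‖ ≤ S3 n) := by
    intro n
    obtain ⟨Un, hUno, hKUn, hc0, hc1, hc2⟩ := contOn_of_C1 (hφ n)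
    refine ⟨fun p hp => le_csSup ?_ ⟨p, hp, rfl⟩, fun p hp => le_csSup ?_ ⟨p, hp, rfl⟩,
      fun p hp => le_csSup ?_ ⟨p, hp, rfl⟩⟩
    · exact (hKcomp.image_of_continuousOn
        (((hVc0.mono hKUV).sub (hc0.mono hKUn)).abs)).bddAbove
    · exact (hKcomp.image_of_continuousOn
        (((hVc1.mono hKUV).sub (hc1.mono hKUn)).abs)).bddAbove
    · exact (hKcomp.image_of_continuousOn
        (((hVc2.mono hKUV).sub (hc2.mono hKUn)).norm)).bddAbove
  set Kc : ℝ := Real.sqrt 2 * C * (d : ℝ) ^ ((3:ℝ)/2) with hKcdef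
  have hKc0 : 0 ≤ Kc := by positivity
  have hsqd : Real.sqrt d ≤ (d : ℝ) ^ ((3:ℝ)/2) := by
    rw [Real.sqrt_eq_rpow]
    apply Real.rpow_le_rpow_of_exponent_le
    · exact_mod_cast Nat.one_le_iff_ne_zero.2 (by omega)
    · norm_num
  -- main pointwise bound
  have main : ∀ n : ℕ, 1 ≤ n → ∀ t ∈ Set.Icc (0:ℝ) T, ∀ m ∈ simplexSet d,
      |errTerm d T H g (φ n) t m| ≤ (Kc + 1) / (n : ℝ) := by
    intro n hn t ht m hm
    obtain ⟨p1, p2, p3⟩ := props n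
    have hmem : (t, m) ∈ K := Set.mk_mem_prod ht hm
    have hsum : S1 n + S2 n + S3 n ≤ 1 / (n : ℝ) := (happrox n hn).le
    have hKc1 : (1:ℝ) ≤ Kc + 1 := by linarith
    have hmul : (Kc + 1) * (S1 n + S2 n + S3 n) ≤ (Kc + 1) / (n : ℝ) := by
      calc (Kc + 1) * (S1 n + S2 n + S3 n) ≤ (Kc + 1) * (1 / (n : ℝ)) :=
            mul_le_mul_of_nonneg_left hsum (by linarith)
        _ = (Kc + 1) / (n : ℝ) := by rw [mul_one_div]
    by_cases hTt : t = T
    · subst hTt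
      rw [errTerm, if_pos rfl, ← hVterm m hm, abs_sub_comm]
      have h1 : |V t m - φ n t m| ≤ S1 n := p1 (t, m) hmem
      nlinarith [hS1nn n, hS2nn n, hS3nn n]
    · rw [errTerm, if_neg hTt]
      have hz := hVpde t ht m hm
      have hsplit : ∑ i, m i * (H i t m (Dvec d (φ n) i t m) - H i t m (Dvec d V i t m))
          = ∑ i, m i * H i t m (Dvec d (φ n) i t m) - ∑ i, m i * H i t m (Dvec d V i t m) := by
        rw [← Finset.sum_sub_distrib]
        exact Finset.sum_congr rfl fun i _ => by ring
      have key : HJBop d H (φ n) t m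
          = (deriv (fun s => V s m) t - deriv (fun s => φ n s m) t)
            + ∑ i, m i * (H i t m (Dvec d (φ n) i t m) - H i t m (Dvec d V i t m)) := by
        rw [hsplit]
        rw [HJBop] at hz ⊢
        linarith
      rw [key]
      have h2 : |deriv (fun s => V s m) t - deriv (fun s => φ n s m) t| ≤ S2 n := p2 (t, m) hmem
      have h3 : ‖gradient (V t) m - gradient (φ n t) m‖ ≤ S3 n := p3 (t, m) hmem
      have hterm : ∀ i : Fin d,
          |H i t m (Dvec d (φ n) i t m) - H i t m (Dvec d V i t m)| ≤ Kc * S3 n := by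
        intro i
        have hLip := hH i t ht m hm (Dvec d (φ n) i t m) (Dvec d V i t m)
        have hD := norm_Dvec_sub_le (φ n) V i t m
        have hGsym : ‖gradient (φ n t) m - gradient (V t) m‖ ≤ S3 n := by
          rw [norm_sub_rev]; exact h3
        have hs2 : (0:ℝ) ≤ Real.sqrt 2 := Real.sqrt_nonneg 2
        have hsd : (0:ℝ) ≤ Real.sqrt d := Real.sqrt_nonneg d
        have hGnn : (0:ℝ) ≤ ‖gradient (φ n t) m - gradient (V t) m‖ := norm_nonneg _
        calc |H i t m (Dvec d (φ n) i t m) - H i t m (Dvec d V i t m)|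
            ≤ C * ‖Dvec d (φ n) i t m - Dvec d V i t m‖ := hLip
          _ ≤ C * (Real.sqrt 2 * Real.sqrt d * ‖gradient (φ n t) m - gradient (V t) m‖) :=
              mul_le_mul_of_nonneg_left hD hC.le
          _ ≤ Kc * S3 n := by
              rw [hKcdef]
              have hdp : (0:ℝ) ≤ (d:ℝ) ^ ((3:ℝ)/2) := by positivity
              have h1 : Real.sqrt d * ‖gradient (φ n t) m - gradient (V t) m‖
                  ≤ (d:ℝ) ^ ((3:ℝ)/2) * S3 n := mul_le_mul hsqd hGsym hGnn hdp
              calc C * (Real.sqrt 2 * Real.sqrt d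
                    * ‖gradient (φ n t) m - gradient (V t) m‖)
                  = C * Real.sqrt 2
                    * (Real.sqrt d * ‖gradient (φ n t) m - gradient (V t) m‖) := by ring
                _ ≤ C * Real.sqrt 2 * ((d:ℝ) ^ ((3:ℝ)/2) * S3 n) :=
                    mul_le_mul_of_nonneg_left h1 (by positivity)
                _ = Real.sqrt 2 * C * (d:ℝ) ^ ((3:ℝ)/2) * S3 n := by ring
      have hsumH : |∑ i, m i * (H i t m (Dvec d (φ n) i t m) - H i t m (Dvec d V i t m))|
          ≤ Kc * S3 n := by
        calc |∑ i, m i * (H i t m (Dvec d (φ n) i t m) - H i t m (Dvec d V i t m))|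
            ≤ ∑ i, |m i * (H i t m (Dvec d (φ n) i t m) - H i t m (Dvec d V i t m))| :=
              Finset.abs_sum_le_sum_abs _ _
          _ ≤ ∑ i, m i * (Kc * S3 n) := by
              apply Finset.sum_le_sum
              intro i _
              rw [abs_mul, abs_of_nonneg (hm.1 i)]
              exact mul_le_mul_of_nonneg_left (hterm i) (hm.1 i)
          _ = Kc * S3 n := by rw [← Finset.sum_mul, hm.2, one_mul]
      calc |(deriv (fun s => V s m) t - deriv (fun s => φ n s m) t)
            + ∑ i, m i * (H i t m (Dvec d (φ n) i t m) - H i t m (Dvec d V i t m))|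
          ≤ |deriv (fun s => V s m) t - deriv (fun s => φ n s m) t|
            + |∑ i, m i * (H i t m (Dvec d (φ n) i t m) - H i t m (Dvec d V i t m))| :=
            abs_add_le _ _
        _ ≤ S2 n + Kc * S3 n := add_le_add h2 hsumH
        _ ≤ (Kc + 1) * (S1 n + S2 n + S3 n) := by nlinarith [hS1nn n, hS2nn n, hS3nn n]
        _ ≤ (Kc + 1) / (n : ℝ) := hmul
  refine ⟨main, ?_, ?_⟩
  · -- sup |errTerm| → 0
    have hub : ∀ n : ℕ, 1 ≤ n →
        sSup ((fun p : ℝ × EuclideanSpace ℝ (Fin d) => |errTerm d T H g (φ n) p.1 p.2|) '' K)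
          ≤ (Kc + 1) / (n : ℝ) := by
      intro n hn
      apply Real.sSup_le
      · rintro x ⟨p, hp, rfl⟩
        exact main n hn p.1 hp.1 p.2 hp.2
      · positivity
    have hlb : ∀ n : ℕ,
        0 ≤ sSup ((fun p : ℝ × EuclideanSpace ℝ (Fin d) =>
          |errTerm d T H g (φ n) p.1 p.2|) '' K) := fun n => nn _ fun p => abs_nonneg _
    refine tendsto_of_tendsto_of_tendsto_of_le_of_le' tendsto_const_nhds
      (tendsto_const_div_atTop_nhds_zero_nat (Kc + 1)) ?_ ?_
    · exact Filter.Eventually.of_forall hlb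
    · filter_upwards [Filter.eventually_ge_atTop 1] with n hn using hub n hn
  · -- sup |φ - V| → 0
    have hEq : ∀ n : ℕ, ((fun p : ℝ × EuclideanSpace ℝ (Fin d) => |φ n p.1 p.2 - V p.1 p.2|) '' K)
        = ((fun p : ℝ × EuclideanSpace ℝ (Fin d) => |V p.1 p.2 - φ n p.1 p.2|) '' K) := by
      intro n
      have hf : (fun p : ℝ × EuclideanSpace ℝ (Fin d) => |φ n p.1 p.2 - V p.1 p.2|)
          = fun p : ℝ × EuclideanSpace ℝ (Fin d) => |V p.1 p.2 - φ n p.1 p.2| := by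
        funext p; rw [abs_sub_comm]
      rw [hf]
    have hub : ∀ n : ℕ, 1 ≤ n →
        sSup ((fun p : ℝ × EuclideanSpace ℝ (Fin d) => |φ n p.1 p.2 - V p.1 p.2|) '' K)
          ≤ 1 / (n : ℝ) := by
      intro n hn
      rw [hEq n]
      have : S1 n ≤ 1 / (n : ℝ) := by
        have := (happrox n hn).le
        have h2 := hS2nn n; have h3 := hS3nn n
        linarith
      exact this
    have hlb : ∀ n : ℕ,
        0 ≤ sSup ((fun p : ℝ × EuclideanSpace ℝ (Fin d) =>
          |φ n p.1 p.2 - V p.1 p.2|) '' K) := fun n => nn _ fun p => abs_nonneg _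
    refine tendsto_of_tendsto_of_tendsto_of_le_of_le' tendsto_const_nhds
      tendsto_one_div_atTop_nhds_zero_nat ?_ ?_
    · exact Filter.Eventually.of_forall hlb
    · filter_upwards [Filter.eventually_ge_atTop 1] with n hn using hub n hn
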